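/- arXiv:1805.02147 — 3 statements merged into one kernel-verified Lean document; each statement's English description precedes it below -/
import Mathlib

section
/- If M is a strong k-chromatic-choosable graph with n vertices and m edges satisfying m ≤ n(k−2), then for every n' ≥ 1 the Cartesian product M □ P_{n'} with a path is chromatic-choosable: χ_ℓ(M □ P_{n'}) = χ(M □ P_{n'}) = k. -/
open SimpleGraph Finset

section ListColoringDefs

variable {V : Type*}

/-- `f` is a proper coloring of `G` choosing each color from the list `L v`. -/
def IsProperListColoring (G : SimpleGraph V) (L : V → Finset ℕ) (f : V → ℕ) : Prop :=
  (∀ v, f v ∈ L v) ∧ ∀ u v, G.Adj u v → f u ≠ f v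

/-- `G` admits a proper coloring from the list assignment `L`. -/
def ListColorable (G : SimpleGraph V) (L : V → Finset ℕ) : Prop :=
  ∃ f, IsProperListColoring G L f

/-- `G` is colorable from every list assignment with lists of size at least `m`. -/
def Choosable (G : SimpleGraph V) (m : ℕ) : Prop :=
  ∀ L : V → Finset ℕ, (∀ v, m ≤ (L v).card) → ListColorable G L

/-- The list chromatic number of `G`. -/
noncomputable def listChromaticNumber (G : SimpleGraph V) : ℕ :=
  sInf { m | Choosable G m }

/-- `G` is strong `k`-chromatic-choosable: `χ(G) = k` and every `(k-1)`-assignment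
from which `G` is not colorable is constant. -/
def StrongCC (G : SimpleGraph V) (k : ℕ) : Prop :=
  G.chromaticNumber = (k : ℕ∞) ∧
    ∀ L : V → Finset ℕ, (∀ v, (L v).card = k - 1) → ¬ ListColorable G L →
      ∀ u v : V, L u = L v

/-- The number of proper `L`-colorings of `G`. -/
noncomputable def numColorings (G : SimpleGraph V) (L : V → Finset ℕ) : ℕ :=
  Set.ncard { f : V → ℕ | IsProperListColoring G L f }

/-- The list color function `P_ℓ(G,k)`: the minimum number of proper `L`-colorings
over all `k`-assignments `L`. -/
noncomputable def listColorFunction (G : SimpleGraph V) (k : ℕ) : ℕ :=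
  sInf { n | ∃ L : V → Finset ℕ, (∀ v, (L v).card = k) ∧ n = numColorings G L }

/-- The chromatic polynomial `P(G,k)`: the number of proper colorings with colors
from `{0, …, k-1}`. -/
noncomputable def chromPoly (G : SimpleGraph V) (k : ℕ) : ℕ :=
  numColorings G (fun _ => Finset.range k)

/-- The join `G ∨ K_p` of `G` with the complete graph on `p` vertices. -/
def joinK (G : SimpleGraph V) (p : ℕ) : SimpleGraph (V ⊕ Fin p) :=
  SimpleGraph.fromRel (fun a b =>
    match a, b with
    | Sum.inl u, Sum.inl v => G.Adj u v
    | _, _ => True)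

/-- The star `K_{1,s}`: center `none` adjacent to the `s` leaves. -/
def starGraph (s : ℕ) : SimpleGraph (Option (Fin s)) :=
  SimpleGraph.fromRel (fun a _ => a = none)

/-- The cycle graph `C_n` on `Fin n` (for `n ≥ 3`). -/
def cycGraph (n : ℕ) : SimpleGraph (Fin n) :=
  SimpleGraph.fromRel (fun a b => b.val = (a.val + 1) % n)

end ListColoringDefs

/-!
Since `χ(M) = k` and paths are `2`-colorable, `χ(M □ P) = k`; it remains to color
`M □ P` from lists of size `k`, which we do layer by layer along the path, removing from
each list the color already used at the same vertex of the previous layer. The reduced lists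
have size at least `k - 1`, and by strong chromatic-choosability they fail only if they are
all equal. The edge bound `m ≤ n (k - 2)` makes the coefficient of `∏ X v ^ (k - 2)` in the
graph polynomial of `M` a weighted count of the list colorings from any `(k - 1)`-lists
(coefficient formula); as `M` is not `(k - 1)`-colorable, no such lists admit a unique
coloring. So each layer has two colorings, and at most one of them can leave the reduced
lists of the next layer constant.
-/

open Polynomial in
theorem Lagrange.coeff_basis_card_sub_one {K : Type*} [Field K] [DecidableEq K]
    {S : Finset K} {i : K} (hi : i ∈ S) :
    (Lagrange.basis S id i).coeff (#S - 1) = (∏ b ∈ S.erase i, (i - b))⁻¹ := by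
  rw [← Lagrange.natDegree_basis Function.injective_id.injOn hi, coeff_natDegree,
    Lagrange.basis, leadingCoeff_prod, ← prod_inv_distrib]
  exact prod_congr rfl fun j _ => by simp [Lagrange.basisDivisor, leadingCoeff_mul]

open Polynomial in
/-- Comparing top coefficients in Lagrange interpolation of `X ^ e` on the nodes `S`. -/
theorem Finset.sum_pow_mul_inv_prod_sub {K : Type*} [Field K] [DecidableEq K]
    {S : Finset K} (hS : S.Nonempty) {e : ℕ} (he : e ≤ #S - 1) :
    ∑ i ∈ S, i ^ e * (∏ b ∈ S.erase i, (i - b))⁻¹ = if e = #S - 1 then 1 else 0 := by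
  have hdeg : ((X : K[X]) ^ e).degree < #S := by
    rw [degree_X_pow]
    exact_mod_cast he.trans_lt (Nat.sub_lt hS.card_pos one_pos)
  have h := congrArg (coeff · (#S - 1))
    (Lagrange.eq_interpolate (f := (X : K[X]) ^ e) Function.injective_id.injOn hdeg)
  simp only [Lagrange.interpolate_apply, finsetSum_coeff, coeff_C_mul, coeff_X_pow] at h
  rw [sum_congr rfl fun i hi => by rw [Lagrange.coeff_basis_card_sub_one hi]] at h
  simpa [eq_comm] using h.symm

namespace MvPolynomial

variable {σ K : Type*} [Fintype σ] [DecidableEq σ] [Field K] [DecidableEq K]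

theorem sum_piFinset_eval_monomial_mul_prod (S : σ → Finset K) (d : σ →₀ ℕ) (a : K) :
    ∑ x ∈ Fintype.piFinset S,
        eval x (monomial d a) * ∏ v, (∏ b ∈ (S v).erase (x v), (x v - b))⁻¹ =
      a * ∏ v, ∑ i ∈ S v, i ^ d v * (∏ b ∈ (S v).erase i, (i - b))⁻¹ := by
  simp_rw [eval_monomial, Finsupp.prod_fintype _ _ (fun v => pow_zero _), mul_assoc,
    ← prod_mul_distrib, ← mul_sum, prod_univ_sum]

theorem coeff_monomial_eq_sum_piFinset {S : σ → Finset K} (hS : ∀ v, (S v).Nonempty)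
    {d : σ →₀ ℕ} (hd : ∑ v, d v ≤ ∑ v, (#(S v) - 1)) (a : K) :
    coeff (Finsupp.equivFunOnFinite.symm fun v => #(S v) - 1) (monomial d a) =
      ∑ x ∈ Fintype.piFinset S, eval x (monomial d a) *
        ∏ v, (∏ b ∈ (S v).erase (x v), (x v - b))⁻¹ := by
  rw [sum_piFinset_eval_monomial_mul_prod, coeff_monomial]
  by_cases hle : ∀ v, d v ≤ #(S v) - 1
  · have hdT : d = Finsupp.equivFunOnFinite.symm (fun v => #(S v) - 1) ↔
        ∀ v, d v = #(S v) - 1 := by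
      simp [Finsupp.ext_iff]
    simp_rw [Finset.sum_pow_mul_inv_prod_sub (hS _) (hle _), Fintype.prod_boole, hdT]
    split_ifs <;> simp
  · push Not at hle
    obtain ⟨v, hv⟩ := hle
    obtain ⟨u, hu⟩ : ∃ u, d u < #(S u) - 1 := by
      by_contra! h
      exact (Finset.sum_lt_sum (fun u _ => h u) ⟨v, mem_univ v, hv⟩).not_ge hd
    have hne : d ≠ Finsupp.equivFunOnFinite.symm fun v => #(S v) - 1 :=
      fun h => hv.ne' (by simp [h])
    rw [if_neg hne, prod_eq_zero (mem_univ u), mul_zero]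
    rw [Finset.sum_pow_mul_inv_prod_sub (hS u) hu.le, if_neg hu.ne]

/-- The coefficient formula behind the Combinatorial Nullstellensatz (Lasoń, Karasev–Petrov). -/
theorem coeff_eq_sum_piFinset {S : σ → Finset K} (hS : ∀ v, (S v).Nonempty)
    {p : MvPolynomial σ K} (hp : p.totalDegree ≤ ∑ v, (#(S v) - 1)) :
    coeff (Finsupp.equivFunOnFinite.symm fun v => #(S v) - 1) p =
      ∑ x ∈ Fintype.piFinset S,
        eval x p * ∏ v, (∏ b ∈ (S v).erase (x v), (x v - b))⁻¹ := by
  conv_lhs => rw [p.as_sum]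
  conv_rhs => enter [2, x]; rw [p.as_sum, map_sum, sum_mul]
  rw [coeff_sum, sum_comm]
  refine sum_congr rfl fun d hd => coeff_monomial_eq_sum_piFinset hS ?_ _
  have := le_totalDegree hd
  rw [Finsupp.sum_fintype _ _ fun _ => rfl] at this
  exact this.trans hp

end MvPolynomial

theorem Sym2.mk_out {α : Type*} (e : Sym2 α) : s(e.out.1, e.out.2) = e := by
  rw [Sym2.mk, Prod.mk.eta, e.out_eq]

namespace SimpleGraph

variable {V W : Type*} {G : SimpleGraph V}

theorem Colorable.boxProd {H : SimpleGraph W} {k : ℕ} (hG : G.Colorable k)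
    (hH : H.Colorable k) : (G □ H).Colorable k := by
  obtain ⟨c⟩ := hG
  obtain ⟨d⟩ := hH
  cases k with
  | zero => exact colorable_zero_iff.mpr ⟨fun p => (c p.1).elim0⟩
  | succ k =>
    refine ⟨Coloring.mk (fun p => c p.1 + d p.2) fun {p q} hpq => ?_⟩
    rcases boxProd_adj.mp hpq with ⟨h, he⟩ | ⟨h, he⟩
    · rw [he]
      exact fun hcd => c.valid h (add_right_cancel hcd)
    · rw [he]
      exact fun hcd => d.valid h (add_left_cancel hcd)

theorem chromaticNumber_boxProd_of_colorable [Nonempty W] {H : SimpleGraph W}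
    {k : ℕ} (hG : G.chromaticNumber = k) (hH : H.Colorable k) :
    (G □ H).chromaticNumber = k := by
  obtain ⟨w⟩ := ‹Nonempty W›
  refine le_antisymm ?_ (hG ▸ chromaticNumber_mono_of_hom (G.boxProdLeft H w).toHom)
  exact ((chromaticNumber_le_iff_colorable.mp hG.le).boxProd hH).chromaticNumber_le

section

variable (M : SimpleGraph V) [Fintype M.edgeSet]

open MvPolynomial

-- Each edge is oriented by `Sym2.out`; other orientations only change the sign.
noncomputable def graphPoly (K : Type*) [CommRing K] : MvPolynomial V K :=
  ∏ e ∈ M.edgeFinset, (X e.out.1 - X e.out.2)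

variable {K : Type*} [Field K]

theorem totalDegree_graphPoly_le : (M.graphPoly K).totalDegree ≤ #M.edgeFinset := by
  refine (totalDegree_finsetProd _ _).trans ?_
  calc ∑ e ∈ M.edgeFinset, (X e.out.1 - X e.out.2 : MvPolynomial V K).totalDegree
      ≤ ∑ _e ∈ M.edgeFinset, 1 :=
        sum_le_sum fun _ _ => (totalDegree_sub _ _).trans (by simp [totalDegree_X])
    _ = #M.edgeFinset := by simp

theorem eval_graphPoly_ne_zero_iff (x : V → K) :
    eval x (M.graphPoly K) ≠ 0 ↔ ∀ u v, M.Adj u v → x u ≠ x v := by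
  simp only [graphPoly, map_prod, map_sub, eval_X, prod_ne_zero_iff, sub_ne_zero,
    mem_edgeFinset]
  constructor
  · intro h u v huv
    have hx := h s(u, v) huv
    rcases Sym2.eq_iff.mp (Sym2.mk_out s(u, v)) with ⟨h1, h2⟩ | ⟨h1, h2⟩
    · rwa [h1, h2] at hx
    · rw [h1, h2] at hx
      exact hx.symm
  · intro h e he
    exact h _ _ (by rwa [← Sym2.mk_out e] at he)

end

end SimpleGraph

section

variable {V : Type*} {G : SimpleGraph V}

theorem ListColorable.mono {L L' : V → Finset ℕ} (h : ListColorable G L)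
    (hLL' : ∀ v, L v ⊆ L' v) : ListColorable G L' :=
  let ⟨f, hf, hadj⟩ := h
  ⟨f, fun v => hLL' v (hf v), hadj⟩

theorem ListColorable.colorable_of_range {m : ℕ} (h : ListColorable G fun _ => range m) :
    G.Colorable m :=
  let ⟨f, hf, hadj⟩ := h
  ⟨Coloring.mk (fun v => ⟨f v, mem_range.mp (hf v)⟩) fun huv h =>
    hadj _ _ huv (congrArg Fin.val h)⟩

theorem Choosable.colorable {m : ℕ} (h : Choosable G m) : G.Colorable m :=
  (h _ fun _ => (card_range m).ge).colorable_of_range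

theorem listChromaticNumber_eq_of_choosable {k : ℕ} (hχ : G.chromaticNumber = k)
    (h : Choosable G k) : listChromaticNumber G = k := by
  refine le_antisymm (Nat.sInf_le h) (le_csInf ⟨k, h⟩ fun j (hj : Choosable G j) => ?_)
  exact_mod_cast hχ ▸ hj.colorable.chromaticNumber_le

end

section

variable {V : Type*} [Fintype V] [DecidableEq V] {M : SimpleGraph V} [Fintype M.edgeSet]

open MvPolynomial

theorem exists_isProperListColoring_of_eval_graphPoly_ne_zero {R : V → Finset ℕ} {x : V → ℚ}
    (hx : x ∈ Fintype.piFinset fun v => (R v).image (Nat.cast : ℕ → ℚ))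
    (hP : eval x (M.graphPoly ℚ) ≠ 0) :
    ∃ f, IsProperListColoring M R f ∧ (fun v => (f v : ℚ)) = x := by
  choose f hfR hfx using fun v => mem_image.mp (Fintype.mem_piFinset.mp hx v)
  refine ⟨f, ⟨hfR, fun u v huv hf => ?_⟩, funext hfx⟩
  exact (M.eval_graphPoly_ne_zero_iff x).mp hP u v huv (by rw [← hfx u, ← hfx v, hf])

/-- By the coefficient formula, both grids compute the same coefficient of the graph
polynomial; it is nonzero because over the first grid only `c` contributes. -/
theorem listColorable_of_unique_isProperListColoring (t : V → ℕ)
    (hE : #M.edgeFinset ≤ ∑ v, t v) {R L : V → Finset ℕ} (hR : ∀ v, #(R v) = t v + 1)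
    (hL : ∀ v, #(L v) = t v + 1) {c : V → ℕ} (hc : IsProperListColoring M R c)
    (huniq : ∀ c', IsProperListColoring M R c' → c' = c) : ListColorable M L := by
  set P := M.graphPoly ℚ
  have hcast {A : V → Finset ℕ} (hA : ∀ v, #(A v) = t v + 1) :
      (fun v => #((A v).image (Nat.cast : ℕ → ℚ)) - 1) = t :=
    funext fun v => by simp [card_image_of_injective _ Nat.cast_injective, hA v]
  have hformula {A : V → Finset ℕ} (hA : ∀ v, #(A v) = t v + 1) :=
    coeff_eq_sum_piFinset (S := fun v => (A v).image (Nat.cast : ℕ → ℚ))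
      (fun v => by simp [← card_pos, card_image_of_injective _ Nat.cast_injective, hA v])
      (p := P) (by rw [hcast hA]; exact (M.totalDegree_graphPoly_le).trans hE)
  have hweight (S : V → Finset ℚ) (x : V → ℚ) :
      ∏ v, (∏ b ∈ (S v).erase (x v), (x v - b))⁻¹ ≠ 0 :=
    prod_ne_zero_iff.mpr fun v _ => inv_ne_zero <| prod_ne_zero_iff.mpr fun _ hb =>
      sub_ne_zero.mpr (ne_of_mem_erase hb).symm
  have hc' : (fun v => (c v : ℚ)) ∈
      Fintype.piFinset fun v => (R v).image (Nat.cast : ℕ → ℚ) :=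
    Fintype.mem_piFinset.mpr fun v => mem_image_of_mem _ (hc.1 v)
  have hcoeff : coeff (Finsupp.equivFunOnFinite.symm t) P ≠ 0 := by
    rw [← hcast hR, hformula hR, sum_eq_single_of_mem _ hc' fun x hx hxc => ?_]
    · refine mul_ne_zero ?_ (hweight _ _)
      exact (M.eval_graphPoly_ne_zero_iff _).mpr fun u v huv h =>
        hc.2 u v huv (by exact_mod_cast h)
    · by_contra hPx
      obtain ⟨f, hf, rfl⟩ := exists_isProperListColoring_of_eval_graphPoly_ne_zero hx
        (left_ne_zero_of_mul hPx)
      exact hxc (by rw [huniq f hf])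
  rw [← hcast hL, hformula hL] at hcoeff
  obtain ⟨x, hx, hPx⟩ := exists_ne_zero_of_sum_ne_zero hcoeff
  obtain ⟨f, hf, -⟩ := exists_isProperListColoring_of_eval_graphPoly_ne_zero hx
    (left_ne_zero_of_mul hPx)
  exact ⟨f, hf⟩

theorem exists_ne_isProperListColoring {k : ℕ} (hk : 2 ≤ k) (hcol : ¬ M.Colorable (k - 1))
    (hE : #M.edgeFinset ≤ Fintype.card V * (k - 2)) {R : V → Finset ℕ}
    (hR : ∀ v, k - 1 ≤ #(R v)) {c : V → ℕ} (hc : IsProperListColoring M R c) :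
    ∃ c', IsProperListColoring M R c' ∧ c' ≠ c := by
  by_contra! huniq
  choose R' hcR' hR'R hR' using fun v =>
    exists_subsuperset_card_eq (singleton_subset_iff.mpr (hc.1 v)) (by simp; omega) (hR v)
  refine hcol (ListColorable.colorable_of_range <|
    listColorable_of_unique_isProperListColoring (fun _ => k - 2) ?_ (R := R')
      (fun v => by rw [hR' v]; omega) (fun _ => by simp; omega)
      ⟨fun v => hcR' v (mem_singleton_self _), hc.2⟩
      fun c' hc' => huniq c' ⟨fun v => hR'R v (hc'.1 v), hc'.2⟩)
  simpa [mul_comm] using hE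

end

namespace StrongCC

variable {V : Type*} {M : SimpleGraph V} {k : ℕ}

theorem exists_adj (hM : StrongCC M k) (hk : 2 ≤ k) : ∃ u v, M.Adj u v :=
  ne_bot_iff_exists_adj.mp <|
    two_le_chromaticNumber_iff_ne_bot.mp (hM.1 ▸ by exact_mod_cast hk)

theorem not_colorable_pred (hM : StrongCC M k) (hk : 2 ≤ k) : ¬ M.Colorable (k - 1) :=
  fun h => by
    have := hM.1 ▸ h.chromaticNumber_le
    norm_cast at this
    omega

theorem eq_const_of_not_listColorable (hM : StrongCC M k) (hk : 2 ≤ k) {R : V → Finset ℕ}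
    (hR : ∀ v, k - 1 ≤ #(R v)) (hRc : ¬ ListColorable M R) :
    ∃ A, #A = k - 1 ∧ ∀ v, R v = A := by
  classical
  obtain ⟨u₀, v₀, h₀⟩ := hM.exists_adj hk
  have : Nontrivial V := nontrivial_of_ne u₀ v₀ (M.ne_of_adj h₀)
  have hconst (T : V → Finset ℕ) (hTR : ∀ v, T v ⊆ R v) (hT : ∀ v, #(T v) = k - 1) :
      ∀ u v, T u = T v :=
    hM.2 T hT fun h => hRc (h.mono hTR)
  choose T hTR hT using fun v => exists_subset_card_eq (hR v)
  refine ⟨T u₀, hT u₀, fun v => eq_of_subset_of_card_le (fun x hx => ?_) (hT u₀ ▸ hR v)⟩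
  obtain ⟨w, hwv⟩ := exists_ne v
  -- Swap the list at `v` for one through `x`; the result is still constant.
  obtain ⟨U, hxU, hUR, hU⟩ :=
    exists_subsuperset_card_eq (singleton_subset_iff.mpr hx) (by simp; omega) (hR v)
  have hTU := hconst (Function.update T v U)
    (fun u => by rcases eq_or_ne u v with rfl | h <;> simp [*])
    (fun u => by rcases eq_or_ne u v with rfl | h <;> simp [*]) v w
  rw [Function.update_self, Function.update_of_ne hwv] at hTU
  rw [← hconst T hTR hT w u₀, ← hTU]
  exact hxU (mem_singleton_self x)

theorem choosable (hM : StrongCC M k) (hk : 2 ≤ k) : Choosable M k := fun L hL => by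
  by_contra hLc
  obtain ⟨A, hA, hLA⟩ :=
    hM.eq_const_of_not_listColorable hk (fun v => (hL v).trans' (k.sub_le 1)) hLc
  obtain ⟨v, -, -⟩ := hM.exists_adj hk
  have := hL v
  rw [hLA v, hA] at this
  omega

theorem eq_insert_of_not_listColorable_erase (hM : StrongCC M k) (hk : 2 ≤ k)
    {W : V → Finset ℕ} (hW : ∀ v, k ≤ #(W v)) {c : V → ℕ}
    (hWc : ¬ ListColorable M fun v => (W v).erase (c v)) :
    ∃ A, #A = k - 1 ∧ ∀ v, c v ∉ A ∧ W v = insert (c v) A := by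
  obtain ⟨A, hA, hWA⟩ := hM.eq_const_of_not_listColorable hk
    (fun v => pred_card_le_card_erase.trans' (Nat.sub_le_sub_right (hW v) 1)) hWc
  refine ⟨A, hA, fun v => ⟨hWA v ▸ notMem_erase _ _, ?_⟩⟩
  have hcW : c v ∈ W v := by
    by_contra hcW
    have := hW v
    rw [← erase_eq_of_notMem hcW, hWA v, hA] at this
    omega
  rw [← hWA v, insert_erase hcW]

theorem listColorable_erase_or (hM : StrongCC M k) (hk : 2 ≤ k) {W : V → Finset ℕ}
    (hW : ∀ v, k ≤ #(W v)) {c₁ c₂ : V → ℕ}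
    (hc₁ : ∀ u v, M.Adj u v → c₁ u ≠ c₁ v)
    (hne : c₁ ≠ c₂) :
    (ListColorable M fun v => (W v).erase (c₁ v)) ∨
      ListColorable M fun v => (W v).erase (c₂ v) := by
  by_contra! ⟨h₁, h₂⟩
  obtain ⟨A, hA, hWA⟩ := hM.eq_insert_of_not_listColorable_erase hk hW h₁
  obtain ⟨B, hB, hWB⟩ := hM.eq_insert_of_not_listColorable_erase hk hW h₂
  obtain ⟨b, hbB, hbA⟩ : ∃ b ∈ B, b ∉ A := by
    by_contra! hBA
    obtain rfl : B = A := eq_of_subset_of_card_le hBA (by rw [hA, hB])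
    exact hne (funext fun v => (insert_inj (hWA v).1).mp ((hWA v).2.symm.trans (hWB v).2))
  -- `b` lies in every `W v = insert (c₁ v) A` but not in `A`, so `c₁` is constant.
  have hb (v : V) : b = c₁ v := by
    have : b ∈ W v := (hWB v).2 ▸ mem_insert_of_mem hbB
    rw [(hWA v).2] at this
    exact (mem_insert.mp this).resolve_right hbA
  obtain ⟨u, v, huv⟩ := hM.exists_adj hk
  exact hc₁ u v huv ((hb u).symm.trans (hb v))

variable [Fintype V] [DecidableEq V] [Fintype M.edgeSet]

theorem exists_isProperListColoring_listColorable_erase (hM : StrongCC M k) (hk : 2 ≤ k)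
    (hE : #M.edgeFinset ≤ Fintype.card V * (k - 2)) {R W : V → Finset ℕ}
    (hR : ∀ v, k - 1 ≤ #(R v)) (hRc : ListColorable M R) (hW : ∀ v, k ≤ #(W v)) :
    ∃ f, IsProperListColoring M R f ∧ ListColorable M fun v => (W v).erase (f v) := by
  obtain ⟨c, hc⟩ := hRc
  obtain ⟨c', hc', hne⟩ :=
    exists_ne_isProperListColoring hk (hM.not_colorable_pred hk) hE hR hc
  rcases hM.listColorable_erase_or hk hW hc.2 hne.symm with h | h
  exacts [⟨c, hc, h⟩, ⟨c', hc', h⟩]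

theorem exists_layerwise_isProperListColoring (hM : StrongCC M k) (hk : 2 ≤ k)
    (hE : #M.edgeFinset ≤ Fintype.card V * (k - 2)) {L : ℕ → V → Finset ℕ}
    (hL : ∀ i v, k ≤ #(L i v)) (i : ℕ) :
    ∃ f : ℕ → V → ℕ, (∀ j ≤ i, IsProperListColoring M (L j) (f j)) ∧
      (∀ j < i, ∀ v, f (j + 1) v ≠ f j v) ∧
      ListColorable M fun v => (L (i + 1) v).erase (f i v) := by
  induction i with
  | zero =>
    obtain ⟨g, hg, hnext⟩ := hM.exists_isProperListColoring_listColorable_erase hk hE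
      (fun v => (hL 0 v).trans' (k.sub_le 1)) (hM.choosable hk _ (hL 0)) (hL 1)
    exact ⟨fun _ => g, fun j hj => by rwa [Nat.le_zero.mp hj],
      fun j hj => absurd hj j.not_lt_zero, hnext⟩
  | succ i ih =>
    obtain ⟨f, hf, hfne, hnext⟩ := ih
    obtain ⟨g, hg, hnext'⟩ := hM.exists_isProperListColoring_listColorable_erase hk hE
      (fun v => pred_card_le_card_erase.trans' (Nat.sub_le_sub_right (hL _ v) 1)) hnext
      (hL (i + 2))
    refine ⟨Function.update f (i + 1) g, fun j hj => ?_, fun j hj v => ?_,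
      by simpa using hnext'⟩
    · rcases Nat.le_succ_iff.mp hj with hj | rfl
      · rw [Function.update_of_ne (by omega)]
        exact hf j hj
      · rw [Function.update_self]
        exact ⟨fun v => mem_of_mem_erase (hg.1 v), hg.2⟩
    · rcases Nat.lt_succ_iff_lt_or_eq.mp hj with hj | rfl
      · rw [Function.update_of_ne (by omega), Function.update_of_ne (by omega)]
        exact hfne j hj v
      · rw [Function.update_self, Function.update_of_ne (by omega)]
        exact ne_of_mem_erase (hg.1 v)

theorem choosable_boxProd_pathGraph (hM : StrongCC M k) (hk : 2 ≤ k)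
    (hE : #M.edgeFinset ≤ Fintype.card V * (k - 2)) (n : ℕ) :
    Choosable (M □ pathGraph n) k := by
  intro L hL
  set L' : ℕ → V → Finset ℕ := fun i v => if h : i < n then L (v, ⟨i, h⟩) else range k
  have hL' (i : ℕ) (v : V) : k ≤ #(L' i v) := by
    by_cases h : i < n <;> simp [L', h, hL]
  obtain ⟨f, hf, hfne, -⟩ := hM.exists_layerwise_isProperListColoring hk hE hL' (n - 1)
  refine ⟨fun p => f p.2 p.1, fun ⟨v, j⟩ => ?_, ?_⟩
  · simpa [L', j.isLt] using (hf j (by omega)).1 v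
  · rintro ⟨u, i⟩ ⟨v, j⟩
      (⟨huv, hij : i = j⟩ | ⟨hij : (pathGraph n).Adj i j, rfl : u = v⟩)
    · subst hij
      exact (hf i (by omega)).2 u v huv
    · have := i.isLt
      have := j.isLt
      rcases pathGraph_adj.mp hij with h | h
      · simpa [← h] using (hfne i (by omega) u).symm
      · simpa [← h] using hfne j (by omega) u

end StrongCC

/-- the Cartesian product of a strong `k`-chromatic-choosable graph
satisfying the edge condition with a path is chromatic-choosable. -/
theorem stmt_11 {V : Type*} [Fintype V] (M : SimpleGraph V) [Fintype M.edgeSet]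
    (k n m : ℕ) (hk : 2 ≤ k) (hM : StrongCC M k)
    (hn : Fintype.card V = n) (hm : M.edgeFinset.card = m)
    (hedge : m ≤ n * (k - 2)) (n' : ℕ) (hn' : 1 ≤ n') :
    listChromaticNumber (M.boxProd (pathGraph n')) = k ∧
      (M.boxProd (pathGraph n')).chromaticNumber = (k : ℕ∞) := by
  classical
  subst hn hm
  have : Nonempty (Fin n') := ⟨⟨0, hn'⟩⟩
  have hχ := M.chromaticNumber_boxProd_of_colorable hM.1
    ((pathGraph.bicoloring n').colorable.mono (by simpa using hk))
  exact ⟨listChromaticNumber_eq_of_choosable hχ (hM.choosable_boxProd_pathGraph hk hedge n'),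
    hχ⟩
end

section
/- For any graph G and natural numbers n, k, the list color function satisfies P_ℓ(G, k−n) · P(K_n, k) ≤ P_ℓ(G ∨ K_n, k) ≤ P(G, k−n) · P(K_n, k), where P(K_n, k) = ∏_{i=0}^{n−1}(k−i). In particular, if P_ℓ(G, m) = P(G, m) for all m, then P_ℓ(G ∨ K_n, k) = P(G ∨ K_n, k) for all k. -/
open SimpleGraph Finset

/-!
Color the join `G ∨ K_n` from a `k`-assignment by first coloring the clique `K_n`, which
needs `n` distinct colors from its lists, and then `G`: every vertex of `G` is adjacent to the
whole clique, so it loses exactly the `n` colors used there and keeps a list of at least `k - n`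
colors. Hence the number of colorings is a sum, over the proper colorings of `K_n`, of numbers of
colorings of `G` from `(k - n)`-assignments. For the constant assignment `{0, …, k - 1}` every
summand is `P(G, k - n)`. The count for `K_n` itself follows by induction from
`K_{n+1} = K_1 ∨ K_n`.
-/

section Counting

variable {V : Type*}

theorem setOf_isProperListColoring_finite [Finite V] (G : SimpleGraph V) (L : V → Finset ℕ) :
    {f | IsProperListColoring G L f}.Finite :=
  (Set.Finite.pi fun v => (L v).finite_toSet).subset fun _ hf v _ => hf.1 v

noncomputable def properListColorings [Finite V] (G : SimpleGraph V) (L : V → Finset ℕ) :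
    Finset (V → ℕ) :=
  (setOf_isProperListColoring_finite G L).toFinset

variable {G : SimpleGraph V} {L : V → Finset ℕ}

theorem numColorings_image {σ : ℕ → ℕ} (hσ : Set.InjOn σ (⋃ v, (L v : Set ℕ))) :
    numColorings G (fun v => (L v).image σ) = numColorings G L := by
  have hσf : ∀ {f : V → ℕ}, (∀ v, f v ∈ L v) → ∀ u v, σ (f u) = σ (f v) → f u = f v :=
    fun hf u v => hσ (Set.mem_iUnion_of_mem u (hf u)) (Set.mem_iUnion_of_mem v (hf v))
  have himage : {f | IsProperListColoring G (fun v => (L v).image σ) f}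
      = (σ ∘ ·) '' {f | IsProperListColoring G L f} := by
    ext g
    constructor
    · rintro ⟨hmem, hadj⟩
      choose f hfL hfg using fun v => mem_image.1 (hmem v)
      refine ⟨f, ⟨hfL, fun u v huv hf => hadj u v huv ?_⟩, funext hfg⟩
      rw [← hfg u, ← hfg v, hf]
    · rintro ⟨f, ⟨hfL, hadj⟩, rfl⟩
      exact ⟨fun v => mem_image_of_mem σ (hfL v),
        fun u v huv hf => hadj u v huv (hσf hfL u v hf)⟩
  rw [numColorings, himage]
  refine Set.InjOn.ncard_image fun f hf g hg hfg => funext fun v => ?_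
  exact hσ (Set.mem_iUnion_of_mem v (hf.1 v)) (Set.mem_iUnion_of_mem v (hg.1 v)) (congrFun hfg v)

/-- Relabel `S` as `{0, …, #S - 1}` by listing it in increasing order with `Nat.nth`. -/
theorem numColorings_const (G : SimpleGraph V) (S : Finset ℕ) :
    numColorings G (fun _ => S) = chromPoly G #S := by
  have hS : (Set.ofPred (· ∈ S)).Finite := S.finite_toSet
  have hcard : #hS.toFinset = #S := by simp
  have hinj : Set.InjOn (Nat.nth (· ∈ S)) (⋃ _ : V, (range #S : Set ℕ)) :=
    (hcard ▸ Nat.nth_injOn hS).mono (Set.iUnion_subset fun _ => by simp)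
  have himage : (range #S).image (Nat.nth (· ∈ S)) = S := by
    apply coe_injective
    simpa [hcard] using Nat.image_nth_Iio_card hS
  rw [chromPoly, ← numColorings_image hinj, himage]

variable [Finite V]

@[simp]
theorem mem_properListColorings {f : V → ℕ} :
    f ∈ properListColorings G L ↔ IsProperListColoring G L f :=
  Set.Finite.mem_toFinset _

theorem numColorings_eq_card_properListColorings :
    numColorings G L = #(properListColorings G L) :=
  Set.ncard_eq_toFinset_card _ _

theorem numColorings_mono {L' : V → Finset ℕ} (h : ∀ v, L v ⊆ L' v) :
    numColorings G L ≤ numColorings G L' :=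
  Set.ncard_le_ncard (fun _ hf => ⟨fun v => h v (hf.1 v), hf.2⟩)
    (setOf_isProperListColoring_finite G L')

end Counting

section ListColorFunction

variable {V : Type*}

theorem exists_numColorings_eq_listColorFunction (G : SimpleGraph V) (k : ℕ) :
    ∃ L : V → Finset ℕ, (∀ v, #(L v) = k) ∧ listColorFunction G k = numColorings G L := by
  have hne : {m | ∃ L : V → Finset ℕ, (∀ v, #(L v) = k) ∧ m = numColorings G L}.Nonempty :=
    ⟨_, fun _ => range k, fun _ => card_range k, rfl⟩
  exact Nat.sInf_mem hne

theorem listColorFunction_le_numColorings [Finite V] {G : SimpleGraph V} {k : ℕ}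
    {L : V → Finset ℕ} (hL : ∀ v, k ≤ #(L v)) : listColorFunction G k ≤ numColorings G L := by
  choose S hSL hS using fun v => exists_subset_card_eq (hL v)
  have hmin : listColorFunction G k ≤ numColorings G S := Nat.sInf_le ⟨S, hS, rfl⟩
  exact hmin.trans (numColorings_mono hSL)

theorem listColorFunction_le_chromPoly [Finite V] (G : SimpleGraph V) (k : ℕ) :
    listColorFunction G k ≤ chromPoly G k :=
  listColorFunction_le_numColorings fun _ => (card_range k).ge

end ListColorFunction

section SmallGraphs

variable {V W : Type*}

theorem numColorings_of_isEmpty [IsEmpty V] (G : SimpleGraph V) (L : V → Finset ℕ) :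
    numColorings G L = 1 := by
  have huniv : {f | IsProperListColoring G L f} = Set.univ :=
    Set.eq_univ_of_forall fun _ => ⟨isEmptyElim, isEmptyElim⟩
  rw [numColorings, huniv, Set.ncard_univ, Nat.card_unique]

theorem numColorings_of_unique [Unique V] (G : SimpleGraph V) (L : V → Finset ℕ) :
    numColorings G L = #(L default) := by
  have hconst : {f | IsProperListColoring G L f} = (fun c _ => c) '' (L default : Set ℕ) := by
    ext f
    refine ⟨fun hf => ⟨f default, hf.1 default, funext fun v => by rw [Unique.eq_default v]⟩, ?_⟩
    rintro ⟨c, hc, rfl⟩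
    refine ⟨fun v => Unique.eq_default v ▸ hc, fun u v huv => ?_⟩
    exact absurd (Subsingleton.elim u v ▸ huv) G.irrefl
  rw [numColorings, hconst, Set.ncard_image_of_injective _ fun c d h => congrFun h default,
    Set.ncard_coe_finset]

theorem listColorFunction_of_unique [Unique V] (G : SimpleGraph V) (k : ℕ) :
    listColorFunction G k = k := by
  obtain ⟨L, hL, hmin⟩ := exists_numColorings_eq_listColorFunction G k
  rw [hmin, numColorings_of_unique, hL]

theorem numColorings_iso {G : SimpleGraph V} {H : SimpleGraph W} (e : G ≃g H)
    (L : W → Finset ℕ) : numColorings H L = numColorings G (fun v => L (e v)) := by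
  have himage : {f | IsProperListColoring G (fun v => L (e v)) f}
      = (· ∘ e) '' {g | IsProperListColoring H L g} := by
    ext f
    refine ⟨fun hf => ⟨f ∘ e.symm, ⟨fun w => ?_, fun u w huw => ?_⟩, by ext; simp⟩, ?_⟩
    · simpa using hf.1 (e.symm w)
    · exact hf.2 _ _ (e.symm.map_adj_iff.2 huw)
    · rintro ⟨g, hg, rfl⟩
      exact ⟨fun v => hg.1 (e v), fun u v huv => hg.2 _ _ (e.map_adj_iff.2 huv)⟩
  rw [numColorings, numColorings, himage,
    Set.ncard_image_of_injective _ e.surjective.injective_comp_right]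

theorem isProperListColoring_top_iff {M : W → Finset ℕ} {g : W → ℕ} :
    IsProperListColoring (⊤ : SimpleGraph W) M g ↔ (∀ j, g j ∈ M j) ∧ Function.Injective g :=
  and_congr_right fun _ => ⟨fun h i j hg => not_not.1 fun hij => h i j hij hg,
    fun h _ _ hij hg => hij (h hg)⟩

end SmallGraphs

section Join

variable {V : Type*} {G : SimpleGraph V} {n : ℕ}

@[simp]
theorem joinK_adj_inl_inl {u v : V} : (joinK G n).Adj (.inl u) (.inl v) ↔ G.Adj u v := by
  simp only [joinK, fromRel_adj, ne_eq, Sum.inl.injEq]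
  exact ⟨fun h => h.2.elim id fun h' => h'.symm, fun h => ⟨G.ne_of_adj h, .inl h⟩⟩

@[simp]
theorem joinK_adj_inl_inr {u : V} {j : Fin n} : (joinK G n).Adj (.inl u) (.inr j) := by
  simp [joinK]

@[simp]
theorem joinK_adj_inr_inl {j : Fin n} {u : V} : (joinK G n).Adj (.inr j) (.inl u) := by
  simp [joinK]

@[simp]
theorem joinK_adj_inr_inr {i j : Fin n} : (joinK G n).Adj (.inr i) (.inr j) ↔ i ≠ j := by
  simp [joinK]

theorem joinK_eq_top [Subsingleton V] (G : SimpleGraph V) (n : ℕ) : joinK G n = ⊤ := by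
  ext a b
  rcases a with u | _ <;> rcases b with v | _
  · simp [Subsingleton.elim u v]
  all_goals simp

theorem isProperListColoring_joinK_iff {L : V ⊕ Fin n → Finset ℕ} {f : V ⊕ Fin n → ℕ} :
    IsProperListColoring (joinK G n) L f ↔
      IsProperListColoring ⊤ (fun j => L (.inr j)) (fun j => f (.inr j)) ∧
      IsProperListColoring G (fun v => L (.inl v) \ univ.image fun j => f (.inr j))
        (fun v => f (.inl v)) := by
  simp only [IsProperListColoring, top_adj, mem_sdiff, mem_image, mem_univ, true_and, not_exists]
  constructor
  · rintro ⟨hmem, hadj⟩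
    exact ⟨⟨fun j => hmem _, fun i j hij => hadj _ _ (joinK_adj_inr_inr.2 hij)⟩,
      fun v => ⟨hmem _, fun j hj => hadj _ _ joinK_adj_inl_inr hj.symm⟩,
      fun u v huv => hadj _ _ (joinK_adj_inl_inl.2 huv)⟩
  · rintro ⟨⟨hmemK, hadjK⟩, hmemG, hadjG⟩
    refine ⟨Sum.rec (fun v => (hmemG v).1) hmemK, ?_⟩
    rintro (u | i) (v | j) huv
    · exact hadjG u v (joinK_adj_inl_inl.1 huv)
    · exact fun h => (hmemG u).2 j h.symm
    · exact fun h => (hmemG v).2 i h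
    · exact hadjK i j (joinK_adj_inr_inr.1 huv)

variable [Finite V]

theorem numColorings_joinK (L : V ⊕ Fin n → Finset ℕ) :
    numColorings (joinK G n) L =
      ∑ g ∈ properListColorings ⊤ (fun j => L (.inr j)),
        numColorings G (fun v => L (.inl v) \ univ.image g) := by
  simp_rw [numColorings_eq_card_properListColorings]
  rw [← card_sigma]
  refine card_nbij' (fun f => ⟨fun j => f (.inr j), fun v => f (.inl v)⟩)
    (fun p => Sum.elim p.2 p.1) ?_ ?_ (fun f _ => Sum.elim_comp_inl_inr f) (fun _ _ => rfl)
  · intro f hf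
    simpa [isProperListColoring_joinK_iff] using hf
  · rintro ⟨g, h⟩ hgh
    simpa [isProperListColoring_joinK_iff] using hgh

theorem chromPoly_joinK (k : ℕ) :
    chromPoly (joinK G n) k = chromPoly (⊤ : SimpleGraph (Fin n)) k * chromPoly G (k - n) := by
  have hsummand : ∀ g ∈ properListColorings ⊤ (fun _ : Fin n => range k),
      numColorings G (fun _ => range k \ univ.image g) = chromPoly G (k - n) := by
    intro g hg
    rw [mem_properListColorings, isProperListColoring_top_iff] at hg
    have himage : univ.image g ⊆ range k := by simpa [subset_iff] using hg.1
    rw [numColorings_const, card_sdiff_of_subset himage, card_image_of_injective _ hg.2,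
      card_range, card_univ, Fintype.card_fin]
  rw [chromPoly, numColorings_joinK, sum_congr rfl hsummand, sum_const, smul_eq_mul,
    ← numColorings_eq_card_properListColorings]
  rfl

theorem numColorings_top_mul_listColorFunction_le {L : V ⊕ Fin n → Finset ℕ} {k : ℕ}
    (hL : ∀ x, k ≤ #(L x)) :
    numColorings ⊤ (fun j => L (.inr j)) * listColorFunction G (k - n)
      ≤ numColorings (joinK G n) L := by
  rw [numColorings_joinK, numColorings_eq_card_properListColorings, ← smul_eq_mul]
  refine card_nsmul_le_sum _ _ _ fun g _ => listColorFunction_le_numColorings fun v => ?_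
  calc k - n ≤ #(L (.inl v)) - #(univ.image g) :=
        tsub_le_tsub (hL _) (card_image_le.trans_eq (card_fin n))
    _ ≤ _ := le_card_sdiff _ _

end Join

section CompleteGraph

theorem numColorings_top_fin_succ {n : ℕ} (M : Fin (n + 1) → Finset ℕ) :
    numColorings (⊤ : SimpleGraph (Fin (n + 1))) M =
      numColorings (joinK (⊥ : SimpleGraph (Fin 1)) n)
        (fun x => M (finSumFinEquiv (Equiv.sumComm _ _ x))) := by
  rw [joinK_eq_top, numColorings_iso (Iso.completeGraph (finSumFinEquiv.symm.trans
    (Equiv.sumComm _ _)))]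
  congr 1
  ext v
  simp [Iso.completeGraph]

theorem chromPoly_top (n k : ℕ) :
    chromPoly (⊤ : SimpleGraph (Fin n)) k = ∏ i ∈ range n, (k - i) := by
  induction n with
  | zero => exact numColorings_of_isEmpty _ _
  | succ n ih =>
    calc chromPoly ⊤ k = chromPoly (joinK (⊥ : SimpleGraph (Fin 1)) n) k :=
          numColorings_top_fin_succ _
      _ = _ := by
        rw [chromPoly_joinK, ih, chromPoly, numColorings_of_unique, card_range, prod_range_succ]

theorem prod_le_numColorings_top {n k : ℕ} {M : Fin n → Finset ℕ} (hM : ∀ j, k ≤ #(M j)) :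
    ∏ i ∈ range n, (k - i) ≤ numColorings ⊤ M := by
  induction n with
  | zero => exact (numColorings_of_isEmpty _ _).ge
  | succ n ih =>
    rw [numColorings_top_fin_succ]
    set L := fun x => M (finSumFinEquiv (Equiv.sumComm _ _ x))
    calc ∏ i ∈ range (n + 1), (k - i)
        = (∏ i ∈ range n, (k - i)) * listColorFunction (⊥ : SimpleGraph (Fin 1)) (k - n) := by
          rw [prod_range_succ, listColorFunction_of_unique]
      _ ≤ numColorings ⊤ (fun j => L (.inr j)) * listColorFunction ⊥ (k - n) :=
          Nat.mul_le_mul_right _ (ih fun _ => hM _)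
      _ ≤ _ := numColorings_top_mul_listColorFunction_le fun _ => hM _

end CompleteGraph

theorem listColorFunction_mul_le_listColorFunction_joinK {V : Type*} [Finite V]
    (G : SimpleGraph V) (n k : ℕ) :
    listColorFunction G (k - n) * ∏ i ∈ range n, (k - i) ≤ listColorFunction (joinK G n) k := by
  obtain ⟨L, hL, hmin⟩ := exists_numColorings_eq_listColorFunction (joinK G n) k
  rw [hmin, mul_comm]
  exact (Nat.mul_le_mul_right _ (prod_le_numColorings_top fun _ => (hL _).ge)).trans
    (numColorings_top_mul_listColorFunction_le fun x => (hL x).ge)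

theorem listColorFunction_joinK_le {V : Type*} [Finite V] (G : SimpleGraph V) (n k : ℕ) :
    listColorFunction (joinK G n) k ≤ chromPoly G (k - n) * ∏ i ∈ range n, (k - i) := by
  rw [← chromPoly_top, mul_comm, ← chromPoly_joinK]
  exact listColorFunction_le_chromPoly _ _

/-- bounds for the list color function of a join with a complete graph. -/
theorem stmt_13 {V : Type*} [Fintype V] (G : SimpleGraph V) (n k : ℕ) :
    chromPoly (⊤ : SimpleGraph (Fin n)) k = (∏ i ∈ Finset.range n, (k - i)) ∧
    listColorFunction G (k - n) * ∏ i ∈ Finset.range n, (k - i)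
      ≤ listColorFunction (joinK G n) k ∧
    listColorFunction (joinK G n) k ≤ chromPoly G (k - n) * ∏ i ∈ Finset.range n, (k - i) ∧
    ((∀ m : ℕ, listColorFunction G m = chromPoly G m) →
      ∀ k' : ℕ, listColorFunction (joinK G n) k' = chromPoly (joinK G n) k') := by
  refine ⟨chromPoly_top n k, listColorFunction_mul_le_listColorFunction_joinK G n k,
    listColorFunction_joinK_le G n k, fun hG k' => ?_⟩
  have hchrom : chromPoly (joinK G n) k' = chromPoly G (k' - n) * ∏ i ∈ range n, (k' - i) := by
    rw [chromPoly_joinK, chromPoly_top, mul_comm]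
  refine le_antisymm (hchrom ▸ listColorFunction_joinK_le G n k') ?_
  rw [hchrom, ← hG]
  exact listColorFunction_mul_le_listColorFunction_joinK G n k'
end

section
/- For any l ≥ 1: χ_ℓ(C_{2l+1} □ K_{1,s}) = 3 if s < 2^{2l+1} − 2, and χ_ℓ(C_{2l+1} □ K_{1,s}) = 4 if s ≥ 2^{2l+1} − 2. -/
open SimpleGraph Finset

/-!
Colour the copy of `C_n` over the centre of the star first; each leaf copy must then be coloured
from its lists with the centre colour removed. An odd cycle is rigid: from lists of size `2` it
fails to be colourable only when all the lists are equal. So for `3`-lists every leaf rules out at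
most one centre colouring, while the centre copy has at least `P(C_n, 3) = 2^n - 2` colourings
(at least `2^n` when the lists are not all equal, counting colourings of the path obtained by
cutting the cycle between two consecutive vertices whose lists differ). Conversely, with centre
lists `{0, 1, 2}` a leaf can be devoted to each of the `2^n - 2` centre colourings `g`, with lists
`{g a, 3, 4}`: whatever the centre colouring, one leaf copy is left with the lists `{3, 4}`.
-/

section ListColoring

variable {V W : Type*} {G : SimpleGraph V} {k s : ℕ}

theorem le_card_erase_of_succ_le {α : Type*} [DecidableEq α] {t : Finset α} (ht : k + 1 ≤ #t)
    (a : α) : k ≤ #(t.erase a) :=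
  (Nat.le_sub_one_of_lt ht).trans pred_card_le_card_erase

theorem Choosable.mono {k' : ℕ} (h : Choosable G k) (hk : k ≤ k') : Choosable G k' :=
  fun L hL => h L fun v => hk.trans (hL v)

theorem listChromaticNumber_eq_succ (h : Choosable G (k + 1)) (h' : ¬Choosable G k) :
    listChromaticNumber G = k + 1 :=
  le_antisymm (Nat.sInf_le h) <| le_csInf ⟨_, h⟩ fun m hm => by
    by_contra! hlt
    exact h' (Choosable.mono hm (by omega))

theorem IsProperListColoring.mono {L L' : V → Finset ℕ} {f : V → ℕ}
    (hf : IsProperListColoring G L f) (hL : ∀ v, L v ⊆ L' v) : IsProperListColoring G L' f :=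
  ⟨fun v => hL v (hf.1 v), hf.2⟩

theorem isProperListColoring_comp_iso {H : SimpleGraph W} (φ : G ≃g H) (L : W → Finset ℕ)
    (f : W → ℕ) :
    IsProperListColoring G (L ∘ φ) (f ∘ φ) ↔ IsProperListColoring H L f := by
  simp only [IsProperListColoring, Function.comp_apply, φ.surjective.forall, φ.map_adj_iff]

theorem starGraph_eq_starGraph_none (s : ℕ) :
    _root_.starGraph s = SimpleGraph.starGraph (none : Option (Fin s)) :=
  rfl

theorem isProperListColoring_boxProd_starGraph_iff {L : V × Option (Fin s) → Finset ℕ}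
    {f : V × Option (Fin s) → ℕ} :
    IsProperListColoring (G □ _root_.starGraph s) L f ↔
      IsProperListColoring G (fun a => L (a, none)) (fun a => f (a, none)) ∧
        ∀ j, IsProperListColoring G (fun a => (L (a, some j)).erase (f (a, none)))
          (fun a => f (a, some j)) := by
  rw [starGraph_eq_starGraph_none]
  have hfiber : ∀ {a b : V} (x : Option (Fin s)), G.Adj a b →
      (G □ SimpleGraph.starGraph none).Adj (a, x) (b, x) :=
    fun x hab => boxProd_adj.2 (Or.inl ⟨hab, rfl⟩)
  constructor
  · intro hf
    refine ⟨⟨fun a => hf.1 (a, none), fun a b hab => hf.2 _ _ (hfiber _ hab)⟩,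
      fun j => ⟨fun a => mem_erase.2 ⟨hf.2 _ _ ?_, hf.1 _⟩, fun a b hab => hf.2 _ _ (hfiber _ hab)⟩⟩
    exact boxProd_adj.2 (Or.inr ⟨starGraph_center_adj' (Option.some_ne_none j).symm, rfl⟩)
  · rintro ⟨hc, hl⟩
    refine ⟨fun ⟨a, x⟩ => ?_, fun ⟨a, x⟩ ⟨b, y⟩ hadj => ?_⟩
    · cases x with
      | none => exact hc.1 a
      | some j => exact mem_of_mem_erase ((hl j).1 a)
    rcases boxProd_adj.1 hadj with ⟨hab, rfl : x = y⟩ | ⟨hxy, rfl : a = b⟩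
    · cases x with
      | none => exact hc.2 a b hab
      | some j => exact (hl j).2 a b hab
    · obtain ⟨hxy, hx | hy⟩ := starGraph_adj.1 hxy
      · subst hx
        obtain _ | j := y
        · exact absurd rfl hxy
        · exact (ne_of_mem_erase ((hl j).1 a)).symm
      · subst hy
        obtain _ | j := x
        · exact absurd rfl hxy
        · exact ne_of_mem_erase ((hl j).1 a)

theorem listColorable_boxProd_starGraph_iff {L : V × Option (Fin s) → Finset ℕ} :
    ListColorable (G □ _root_.starGraph s) L ↔
      ∃ f, IsProperListColoring G (fun a => L (a, none)) f ∧
        ∀ j, ListColorable G fun a => (L (a, some j)).erase (f a) := by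
  constructor
  · rintro ⟨F, hF⟩
    obtain ⟨hc, hl⟩ := isProperListColoring_boxProd_starGraph_iff.1 hF
    exact ⟨_, hc, fun j => ⟨_, hl j⟩⟩
  · rintro ⟨f, hf, hl⟩
    choose g hg using hl
    exact ⟨fun p => p.2.elim (f p.1) fun j => g j p.1,
      isProperListColoring_boxProd_starGraph_iff.2 ⟨hf, hg⟩⟩

theorem choosable_boxProd_starGraph_succ (h : Choosable G k) :
    Choosable (G □ _root_.starGraph s) (k + 1) := by
  intro L hL
  obtain ⟨f, hf⟩ := h _ fun a => (hL (a, none)).trans' (Nat.le_succ k)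
  exact listColorable_boxProd_starGraph_iff.2
    ⟨f, hf, fun j => h _ fun a => le_card_erase_of_succ_le (hL (a, some j)) _⟩

theorem not_choosable_boxProd_starGraph_of_not_listColorable {T : Finset ℕ} (hT : k ≤ #T)
    (h : ¬ListColorable G fun _ => T) : ¬Choosable (G □ _root_.starGraph s) k := fun hch => by
  obtain ⟨f, hf, -⟩ := listColorable_boxProd_starGraph_iff.1 (hch (fun _ => T) fun _ => hT)
  exact h ⟨f, hf⟩

theorem mem_of_not_listColorable_erase (hch : Choosable G (k + 1))
    (hrigid : ∀ K : V → Finset ℕ, (∀ v, k ≤ #(K v)) → ¬ListColorable G K → ∀ u v, K u = K v)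
    {L : V → Finset ℕ} (hL : ∀ v, k + 1 ≤ #(L v)) {f : V → ℕ}
    (hf : ¬ListColorable G fun a => (L a).erase (f a)) (a : V) : f a ∈ L a := by
  by_contra ha
  refine hf (hch _ fun b => ?_)
  rw [hrigid _ (fun v => le_card_erase_of_succ_le (hL v) _) hf b a, erase_eq_of_notMem ha]
  exact hL a

theorem eq_of_not_listColorable_erase (hch : Choosable G (k + 1))
    (hrigid : ∀ K : V → Finset ℕ, (∀ v, k ≤ #(K v)) → ¬ListColorable G K → ∀ u v, K u = K v)
    {L : V → Finset ℕ} (hL : ∀ v, k + 1 ≤ #(L v)) {u v : V} (huv : G.Adj u v)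
    {f₁ f₂ : V → ℕ} (hf₁ : ∀ a b, G.Adj a b → f₁ a ≠ f₁ b)
    (h₁ : ¬ListColorable G fun a => (L a).erase (f₁ a))
    (h₂ : ¬ListColorable G fun a => (L a).erase (f₂ a)) : f₁ = f₂ := by
  have hk : ∀ (f : V → ℕ) b, k ≤ #((L b).erase (f b)) := fun f b =>
    le_card_erase_of_succ_le (hL b) _
  have hmem := mem_of_not_listColorable_erase hch hrigid hL h₁
  by_contra hne
  obtain ⟨a, ha⟩ := Function.ne_iff.1 hne
  -- `f₁ a` lies in every list, as the lists minus `f₂` all agree, but in none of the lists minus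
  -- `f₁`, as those agree too; so `f₁` is constant.
  have hconst : ∀ b, f₁ b = f₁ a := fun b => by
    have h₂b : f₁ a ∈ (L b).erase (f₂ b) :=
      hrigid _ (hk f₂) h₂ a b ▸ mem_erase.2 ⟨ha, hmem a⟩
    by_contra hb
    have h₁b : f₁ a ∈ (L b).erase (f₁ b) := mem_erase.2 ⟨Ne.symm hb, mem_of_mem_erase h₂b⟩
    exact notMem_erase (f₁ a) (L a) (hrigid _ (hk f₁) h₁ a b ▸ h₁b)
  exact hf₁ u v huv ((hconst u).trans (hconst v).symm)

end ListColoring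

section FiniteListColoring

variable {V W : Type*} [Fintype V] [DecidableEq V] {G : SimpleGraph V} {k s : ℕ}

noncomputable def listColorings (G : SimpleGraph V) (L : V → Finset ℕ) : Finset (V → ℕ) := by
  classical exact (Fintype.piFinset L).filter (IsProperListColoring G L)

theorem mem_listColorings {L : V → Finset ℕ} {f : V → ℕ} :
    f ∈ listColorings G L ↔ IsProperListColoring G L f := by
  simp only [listColorings, mem_filter, Fintype.mem_piFinset, and_iff_right_iff_imp]
  exact fun hf => hf.1

theorem listColorable_iff_nonempty {L : V → Finset ℕ} :
    ListColorable G L ↔ (listColorings G L).Nonempty := by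
  simp only [ListColorable, Finset.Nonempty, mem_listColorings]

theorem listColorings_mono {L L' : V → Finset ℕ} (hL : ∀ v, L v ⊆ L' v) :
    listColorings G L ⊆ listColorings G L' := fun _ hf =>
  mem_listColorings.2 ((mem_listColorings.1 hf).mono hL)

theorem card_listColorings_comp_iso [Fintype W] [DecidableEq W] {H : SimpleGraph W}
    (φ : G ≃g H) (L : W → Finset ℕ) :
    #(listColorings G (L ∘ φ)) = #(listColorings H L) := by
  refine card_nbij' (· ∘ φ.symm) (· ∘ φ) (fun f hf => ?_) (fun f hf => ?_) (fun f _ => ?_)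
    (fun f _ => ?_)
  · rw [mem_coe, mem_listColorings, ← isProperListColoring_comp_iso φ]
    simpa [Function.comp_def] using mem_listColorings.1 hf
  · exact mem_listColorings.2 ((isProperListColoring_comp_iso φ L f).2 (mem_listColorings.1 hf))
  · ext; simp
  · ext; simp

theorem choosable_boxProd_starGraph {u v : V} (huv : G.Adj u v)
    (hrigid : ∀ K : V → Finset ℕ, (∀ v, k ≤ #(K v)) → ¬ListColorable G K → ∀ u v, K u = K v)
    (hcount : ∀ L : V → Finset ℕ, (∀ v, k + 1 ≤ #(L v)) → s < #(listColorings G L)) :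
    Choosable (G □ _root_.starGraph s) (k + 1) := by
  classical
  have hch : Choosable G (k + 1) := fun L hL =>
    listColorable_iff_nonempty.2 (card_pos.1 (Nat.zero_lt_of_lt (hcount L hL)))
  intro L hL
  set F := listColorings G fun a => L (a, none)
  set bad : Fin s → Finset (V → ℕ) := fun j =>
    F.filter fun f => ¬ListColorable G fun a => (L (a, some j)).erase (f a)
  have hbad : ∀ j, #(bad j) ≤ 1 := fun j => card_le_one.2 fun f₁ h₁ f₂ h₂ =>
    eq_of_not_listColorable_erase hch hrigid (fun a => hL (a, some j)) huv
      (mem_listColorings.1 (mem_filter.1 h₁).1).2 (mem_filter.1 h₁).2 (mem_filter.1 h₂).2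
  have hlt : #(univ.biUnion bad) < #F := calc
    #(univ.biUnion bad) ≤ ∑ j, #(bad j) := card_biUnion_le
    _ ≤ ∑ _j : Fin s, 1 := sum_le_sum fun j _ => hbad j
    _ = s := by simp
    _ < #F := hcount _ fun a => hL (a, none)
  obtain ⟨f, hfF, hfgood⟩ := exists_mem_notMem_of_card_lt_card hlt
  refine listColorable_boxProd_starGraph_iff.2 ⟨f, mem_listColorings.1 hfF, fun j => ?_⟩
  by_contra hj
  exact hfgood (mem_biUnion.2 ⟨j, mem_univ j, mem_filter.2 ⟨hfF, hj⟩⟩)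

theorem exists_fin_cover {α : Type*} (F : Finset α) (hs : #F ≤ s) (d : α) :
    ∃ ψ : Fin s → α, (∀ j, ψ j ∈ F ∨ ψ j = d) ∧ ∀ x ∈ F, ∃ j, ψ j = x := by
  refine ⟨fun j => F.toList.getD j d, fun j => ?_, fun x hx => ?_⟩
  · simp only [List.getD_eq_getElem?_getD]
    cases h : F.toList[(j : ℕ)]? with
    | none => exact Or.inr rfl
    | some x => exact Or.inl (mem_toList.1 (List.mem_of_getElem? h))
  · obtain ⟨i, hi, rfl⟩ := List.getElem_of_mem (mem_toList.2 hx)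
    exact ⟨⟨i, hi.trans_le (by simpa using hs)⟩, List.getD_eq_getElem _ _ hi⟩

theorem not_choosable_boxProd_starGraph (L : V → Finset ℕ) (T : Finset ℕ)
    (hL : ∀ v, k ≤ #(L v)) (hT : k ≤ #T + 1) (hLT : ∀ v, Disjoint (L v) T)
    (hTcol : ¬ListColorable G fun _ => T) (hs : #(listColorings G L) ≤ s) :
    ¬Choosable (G □ _root_.starGraph s) k := by
  intro hch
  obtain ⟨x₀, hx₀⟩ := Infinite.exists_notMem_finset T
  -- leaf `j` is reserved for the centre colouring `ψ j`; spare leaves get the dummy `fun _ => x₀`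
  obtain ⟨ψ, hψ, hcover⟩ := exists_fin_cover _ hs fun _ => x₀
  have hψT : ∀ j a, ψ j a ∉ T := fun j a => by
    rcases hψ j with h | h
    · exact disjoint_left.1 (hLT a) ((mem_listColorings.1 h).1 a)
    · rwa [h]
  obtain ⟨g, hg, hleaf⟩ := listColorable_boxProd_starGraph_iff.1 <|
    hch (fun p => p.2.elim (L p.1) fun j => insert (ψ j p.1) T) fun
      | (a, none) => hL a
      | (a, some j) => by simpa [card_insert_of_notMem (hψT j a)] using hT
  obtain ⟨j, rfl⟩ := hcover g (mem_listColorings.2 hg)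
  exact hTcol (by simpa [erase_insert (hψT j _)] using hleaf j)

end FiniteListColoring

section Path

variable {m k : ℕ}

def pathColorings (L : Fin (m + 1) → Finset ℕ) : Finset (Fin (m + 1) → ℕ) :=
  (Fintype.piFinset L).filter fun f => ∀ i : Fin m, f i.castSucc ≠ f i.succ

theorem apply_mem_of_mem_pathColorings {L : Fin (m + 1) → Finset ℕ} {f : Fin (m + 1) → ℕ}
    (hf : f ∈ pathColorings L) (i : Fin (m + 1)) : f i ∈ L i :=
  Fintype.mem_piFinset.1 (mem_filter.1 hf).1 i

theorem pathColorings_zero (L : Fin 1 → Finset ℕ) :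
    pathColorings L = (L 0).map (Equiv.funUnique (Fin 1) ℕ).symm.toEmbedding := by
  ext f
  simp [pathColorings, Fin.forall_fin_one]

theorem snoc_mem_pathColorings {L : Fin (m + 2) → Finset ℕ} {g : Fin (m + 1) → ℕ} {x : ℕ} :
    (Fin.snoc g x : Fin (m + 2) → ℕ) ∈ pathColorings L ↔
      g ∈ pathColorings (Fin.init L) ∧ x ∈ L (Fin.last _) ∧ x ≠ g (Fin.last _) := by
  simp only [pathColorings, mem_filter, Fintype.mem_piFinset, Fin.forall_fin_succ' (n := m + 1),
    Fin.forall_fin_succ' (n := m), Fin.snoc_castSucc, Fin.snoc_last, Fin.succ_castSucc,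
    Fin.succ_last, Fin.init]
  tauto

theorem card_filter_pathColorings_snoc (L : Fin (m + 2) → Finset ℕ)
    (P : (Fin (m + 2) → ℕ) → Prop) [DecidablePred P] :
    #((pathColorings L).filter P) = ∑ g ∈ pathColorings (Fin.init L),
      #(((L (Fin.last _)).erase (g (Fin.last _))).filter fun x => P (Fin.snoc g x)) := by
  rw [card_eq_sum_card_fiberwise (f := Fin.init) (t := pathColorings (Fin.init L))]
  · refine sum_congr rfl fun g hg => card_nbij' (· (Fin.last _))
      (Fin.snoc (α := fun _ => ℕ) g) ?_ ?_ ?_ ?_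
    · intro f hf
      obtain ⟨hfP, rfl⟩ := mem_filter.1 hf
      obtain ⟨hf, hP⟩ := mem_filter.1 hfP
      rw [← Fin.snoc_init_self f, snoc_mem_pathColorings] at hf
      simp only [coe_filter, Set.mem_ofPred_eq, mem_erase, Fin.snoc_init_self]
      exact ⟨⟨hf.2.2, hf.2.1⟩, hP⟩
    · intro x hx
      simp only [coe_filter, mem_erase] at hx
      simpa [snoc_mem_pathColorings, hg] using ⟨⟨hx.1.2, hx.1.1⟩, hx.2⟩
    · intro f hf
      obtain ⟨-, rfl⟩ := mem_filter.1 hf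
      exact Fin.snoc_init_self f
    · intro x _
      exact Fin.snoc_last (α := fun _ => ℕ) x g
  · intro f hf
    rw [mem_coe, mem_filter, ← Fin.snoc_init_self f, snoc_mem_pathColorings] at hf
    exact hf.1.1

theorem card_filter_pathColorings_ge (L : Fin (m + 1) → Finset ℕ)
    (hL : ∀ i : Fin m, k + 1 ≤ #(L i.succ)) (p : ℕ → Prop) [DecidablePred p] :
    #((L 0).filter p) * k ^ m ≤ #((pathColorings L).filter fun f => p (f 0)) := by
  induction m with
  | zero => simp [pathColorings_zero, filter_map, Function.comp_def]
  | succ m ih =>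
    rw [card_filter_pathColorings_snoc]
    simp only [Fin.snoc_apply_zero, filter_const, apply_ite card, card_empty, ← sum_filter]
    calc #((L 0).filter p) * k ^ (m + 1)
        = #((L 0).filter p) * k ^ m * k := by ring
      _ ≤ #((pathColorings (Fin.init L)).filter fun g => p (g 0)) * k :=
        Nat.mul_le_mul_right _ (ih (Fin.init L) fun i => by
          rw [Fin.init, ← Fin.succ_castSucc]; exact hL i.castSucc)
      _ ≤ _ := by
        simpa using card_nsmul_le_sum _ _ k fun g _ =>
          le_card_erase_of_succ_le (hL (Fin.last m)) _

theorem card_pathColorings_const (S : Finset ℕ) (hS : #S = k + 1) :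
    #(pathColorings fun _ : Fin (m + 1) => S) = (k + 1) * k ^ m := by
  induction m with
  | zero => simp [pathColorings_zero, hS]
  | succ m ih =>
    have h := card_filter_pathColorings_snoc (fun _ : Fin (m + 2) => S) fun _ => True
    have hinit : Fin.init (fun _ : Fin (m + 2) => S) = fun _ => S := rfl
    simp only [filter_true, hinit] at h
    rw [h, sum_congr rfl fun g hg =>
      card_erase_of_mem (apply_mem_of_mem_pathColorings hg (Fin.last m)), hS,
      Nat.add_sub_cancel, sum_const, ih, smul_eq_mul]
    ring

end Path

section Cycle

variable {m k : ℕ}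

theorem le_of_forall_add_one_le {α : Type*} [Preorder α] {f : Fin (m + 1) → α}
    (h : ∀ i, f (i + 1) ≤ f i) (i j : Fin (m + 1)) : f j ≤ f i := by
  have hd : ∀ d : Fin (m + 1), f (i + d) ≤ f i := Fin.induction (by simp) fun d hd => by
    rw [← Fin.coeSucc_eq_succ, ← add_assoc]
    exact (h _).trans hd
  simpa using hd (j - i)

theorem cycGraph_adj_iff {a b : Fin (m + 2)} :
    (cycGraph (m + 2)).Adj a b ↔ b = a + 1 ∨ a = b + 1 := by
  have key : ∀ a b : Fin (m + 2), b.val = (a.val + 1) % (m + 2) ↔ b = a + 1 := fun a b => by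
    rw [Fin.ext_iff, Fin.val_add, Fin.val_one]
  rw [cycGraph, fromRel_adj, key, key]
  refine ⟨fun h => h.2, fun h => ⟨?_, h⟩⟩
  rintro rfl
  simp at h

theorem card_listColorings_cycGraph_add (L : Fin (m + 2) → Finset ℕ) (r : Fin (m + 2)) :
    #(listColorings (cycGraph (m + 2)) fun i => L (i + r)) =
      #(listColorings (cycGraph (m + 2)) L) :=
  card_listColorings_comp_iso
    ⟨Equiv.addRight r, by simp [cycGraph_adj_iff, add_right_comm _ r 1]⟩ L

theorem listColorings_cycGraph (L : Fin (m + 2) → Finset ℕ) :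
    listColorings (cycGraph (m + 2)) L =
      (pathColorings L).filter fun f => f (Fin.last _) ≠ f 0 := by
  ext f
  have hadj : (∀ u v : Fin (m + 2), (cycGraph (m + 2)).Adj u v → f u ≠ f v) ↔
      ∀ i : Fin (m + 2), f i ≠ f (i + 1) := by
    simp only [cycGraph_adj_iff]
    refine ⟨fun h i => h _ _ (Or.inl rfl), fun h u v => ?_⟩
    rintro (rfl | rfl)
    exacts [h u, (h v).symm]
  rw [mem_listColorings, IsProperListColoring, hadj]
  simp only [pathColorings, mem_filter, Fintype.mem_piFinset, Fin.forall_fin_succ' (n := m + 1),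
    Fin.last_add_one, Fin.coeSucc_eq_succ]
  tauto

theorem card_listColorings_cycGraph_ge (L : Fin (m + 2) → Finset ℕ) (hL : ∀ i, k + 2 ≤ #(L i)) :
    k * #(pathColorings (Fin.init L)) +
        #((pathColorings (Fin.init L)).filter fun g => g 0 ∉ L (Fin.last _)) ≤
      #(listColorings (cycGraph (m + 2)) L) := by
  -- The last vertex avoids the colours of its two neighbours, one of which may lie off its list.
  rw [listColorings_cycGraph, card_filter_pathColorings_snoc, card_filter, mul_comm,
    ← smul_eq_mul, ← sum_const, ← sum_add_distrib]
  refine sum_le_sum fun g _ => ?_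
  simp only [Fin.snoc_last, Fin.snoc_apply_zero, filter_ne']
  split_ifs with hg
  · exact le_card_erase_of_succ_le (le_card_erase_of_succ_le (hL _) _) _
  · rw [erase_eq_of_notMem fun h => hg (mem_of_mem_erase h)]
    exact le_card_erase_of_succ_le (hL _) _

theorem pow_le_card_listColorings_cycGraph {L : Fin (m + 2) → Finset ℕ}
    (hL : ∀ i, k + 2 ≤ #(L i)) {c : ℕ} (hc₀ : c ∈ L 0) (hc : c ∉ L (Fin.last _)) :
    (k + 1) ^ (m + 2) ≤ #(listColorings (cycGraph (m + 2)) L) := by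
  have hinit : ∀ i : Fin m, k + 1 + 1 ≤ #(Fin.init L i.succ) := fun i => hL _
  have hpath := card_filter_pathColorings_ge (Fin.init L) hinit fun _ => True
  have hfirst := card_filter_pathColorings_ge (Fin.init L) hinit (· ∉ L (Fin.last _))
  have hc' : 1 ≤ #((L 0).filter (· ∉ L (Fin.last _))) := card_pos.2 ⟨c, mem_filter.2 ⟨hc₀, hc⟩⟩
  simp only [filter_true] at hpath
  calc (k + 1) ^ (m + 2) = k * ((k + 2) * (k + 1) ^ m) + 1 * (k + 1) ^ m := by ring
    _ ≤ k * (#(L 0) * (k + 1) ^ m) + #((L 0).filter (· ∉ L (Fin.last _))) * (k + 1) ^ m := by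
      gcongr
      exact hL 0
    _ ≤ _ := (add_le_add (Nat.mul_le_mul_left _ hpath) hfirst).trans
      (card_listColorings_cycGraph_ge L hL)

theorem pow_le_card_listColorings_cycGraph_of_ne {L : Fin (m + 2) → Finset ℕ}
    (hL : ∀ i, k + 2 ≤ #(L i)) {i j : Fin (m + 2)} (hij : L i ≠ L j) :
    (k + 1) ^ (m + 2) ≤ #(listColorings (cycGraph (m + 2)) L) := by
  -- Rotate the cycle so that some colour of the first list is missing from the last one.
  obtain ⟨r, hr⟩ : ∃ r, ¬L (r + 1) ⊆ L r := by
    by_contra! h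
    exact hij (le_antisymm (le_of_forall_add_one_le h j i) (le_of_forall_add_one_le h i j))
  obtain ⟨c, hc₀, hc⟩ := not_subset.1 hr
  rw [← card_listColorings_cycGraph_add L (r + 1)]
  refine pow_le_card_listColorings_cycGraph (fun _ => hL _) (c := c) (by rwa [zero_add]) ?_
  rwa [add_comm r 1, ← add_assoc, Fin.last_add_one, zero_add]

theorem eq_of_not_listColorable_cycGraph {K : Fin (m + 2) → Finset ℕ} (hK : ∀ i, 2 ≤ #(K i))
    (h : ¬ListColorable (cycGraph (m + 2)) K) (i j : Fin (m + 2)) : K i = K j := by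
  by_contra hij
  refine h (listColorable_iff_nonempty.2 (card_pos.1 ?_))
  simpa using pow_le_card_listColorings_cycGraph_of_ne (k := 0) hK hij

theorem card_listColorings_cycGraph_const {S : Finset ℕ} (hS : #S = k + 1) :
    (#(listColorings (cycGraph (m + 2)) fun _ => S) : ℤ) = k ^ (m + 2) + (-1) ^ (m + 2) * k := by
  -- A colouring of the path on `n + 2` vertices whose ends agree is a colouring of the cycle on
  -- the first `n + 1` of them, so consecutive cycle counts add up to a path count.
  suffices h : ∀ n : ℕ, (#((pathColorings fun _ : Fin (n + 1) => S).filter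
      fun f => f (Fin.last n) ≠ f 0) : ℤ) = k ^ (n + 1) + (-1) ^ (n + 1) * k by
    rw [listColorings_cycGraph]
    exact h (m + 1)
  intro n
  induction n with
  | zero => simp
  | succ n ih =>
    have hsplit := card_filter_add_card_filter_not (s := pathColorings fun _ : Fin (n + 2) => S)
      fun f => f (Fin.last _) = f 0
    have hclosed : #((pathColorings fun _ : Fin (n + 2) => S).filter
        fun f => f (Fin.last _) = f 0) =
        #((pathColorings fun _ : Fin (n + 1) => S).filter fun f => f (Fin.last n) ≠ f 0) := by
      rw [card_filter_pathColorings_snoc, card_filter]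
      refine sum_congr rfl fun g hg => ?_
      simp [filter_eq', apply_mem_of_mem_pathColorings hg 0, ne_comm, apply_ite card]
    rw [card_pathColorings_const S hS, hclosed] at hsplit
    have h := congrArg (Nat.cast : ℕ → ℤ) hsplit
    simp only [Nat.cast_add, Nat.cast_mul, Nat.cast_pow, Nat.cast_one] at h
    linear_combination h - ih

end Cycle

section OddCycle

variable {m s : ℕ}

theorem card_listColorings_cycGraph_of_card_eq_three (hm : Odd m) {S : Finset ℕ} (hS : #S = 3) :
    #(listColorings (cycGraph (m + 2)) fun _ => S) = 2 ^ (m + 2) - 2 := by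
  have h := card_listColorings_cycGraph_const (m := m) (k := 2) hS
  rw [(hm.add_even even_two).neg_one_pow] at h
  have : 2 ≤ 2 ^ (m + 2) := Nat.le_self_pow (by omega) 2
  push_cast at h
  zify [this]
  linarith

theorem not_listColorable_cycGraph_of_card_eq_two (hm : Odd m) {S : Finset ℕ} (hS : #S = 2) :
    ¬ListColorable (cycGraph (m + 2)) fun _ => S := by
  have h := card_listColorings_cycGraph_const (m := m) (k := 1) hS
  rw [(hm.add_even even_two).neg_one_pow] at h
  push_cast at h
  norm_num at h
  rw [listColorable_iff_nonempty, h]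
  exact not_nonempty_empty

theorem two_pow_sub_two_le_card_listColorings_cycGraph (hm : Odd m) {L : Fin (m + 2) → Finset ℕ}
    (hL : ∀ i, 3 ≤ #(L i)) : 2 ^ (m + 2) - 2 ≤ #(listColorings (cycGraph (m + 2)) L) := by
  by_cases hconst : ∀ i, L i = L 0
  · obtain ⟨S, hS, hS3⟩ := exists_subset_card_eq (hL 0)
    rw [← card_listColorings_cycGraph_of_card_eq_three hm hS3]
    exact card_le_card (listColorings_mono fun i => hconst i ▸ hS)
  · obtain ⟨i, hi⟩ := not_forall.1 hconst
    exact (Nat.sub_le _ _).trans (pow_le_card_listColorings_cycGraph_of_ne (k := 1) hL hi)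

theorem listChromaticNumber_cycGraph_boxProd_starGraph_of_lt (hm : Odd m)
    (hs : s < 2 ^ (m + 2) - 2) :
    listChromaticNumber ((cycGraph (m + 2)).boxProd (_root_.starGraph s)) = 3 :=
  listChromaticNumber_eq_succ
    (choosable_boxProd_starGraph (cycGraph_adj_iff.2 (Or.inl (zero_add 1).symm))
      (fun _ hK hK' => eq_of_not_listColorable_cycGraph hK hK')
      fun _ hL => hs.trans_le (two_pow_sub_two_le_card_listColorings_cycGraph hm hL))
    (not_choosable_boxProd_starGraph_of_not_listColorable (T := {0, 1}) (by decide)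
      (not_listColorable_cycGraph_of_card_eq_two hm (by decide)))

theorem listChromaticNumber_cycGraph_boxProd_starGraph_of_le (hm : Odd m)
    (hs : 2 ^ (m + 2) - 2 ≤ s) :
    listChromaticNumber ((cycGraph (m + 2)).boxProd (_root_.starGraph s)) = 4 := by
  have hpos : 0 < 2 ^ (m + 2) - 2 := Nat.sub_pos_of_lt <|
    (Nat.lt_two_pow_self (n := m + 2)).trans_le' (by omega)
  refine listChromaticNumber_eq_succ (choosable_boxProd_starGraph_succ fun L hL =>
    listColorable_iff_nonempty.2 <| card_pos.1 <|
      hpos.trans_le (two_pow_sub_two_le_card_listColorings_cycGraph hm hL)) ?_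
  exact not_choosable_boxProd_starGraph (fun _ => range 3) {3, 4} (fun _ => by simp) (by decide)
    (fun _ => by decide) (not_listColorable_cycGraph_of_card_eq_two hm (by decide))
    ((card_listColorings_cycGraph_of_card_eq_three hm (by simp)).trans_le hs)

end OddCycle

/-- `χ_ℓ(C_{2l+1} □ K_{1,s})` transitions from 3 to 4 at `s = 2^{2l+1} - 2`. -/
theorem stmt_15 (l s : ℕ) (hl : 1 ≤ l) :
    (s < 2 ^ (2 * l + 1) - 2 →
      listChromaticNumber ((cycGraph (2 * l + 1)).boxProd (_root_.starGraph s)) = 3) ∧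
    (2 ^ (2 * l + 1) - 2 ≤ s →
      listChromaticNumber ((cycGraph (2 * l + 1)).boxProd (_root_.starGraph s)) = 4) := by
  obtain ⟨m, hm, hlm⟩ : ∃ m, Odd m ∧ 2 * l + 1 = m + 2 := ⟨2 * l - 1, ⟨l - 1, by omega⟩, by omega⟩
  rw [hlm]
  exact ⟨listChromaticNumber_cycGraph_boxProd_starGraph_of_lt hm,
    listChromaticNumber_cycGraph_boxProd_starGraph_of_le hm⟩
end
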